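/- Let u : J × ℝ → ℝ be a smooth classical solution of (KdV) (i.e. ∂_t u + ∂_x(∂_x² u + u²) = 0 pointwise) on an interval J ⊆ ℝ, such that u(t,·) ∈ 𝒮(ℝ) for every t ∈ J and all partial derivatives of u are continuous and decay in x faster than any polynomial, locally uniformly in t. Then the quantity ∫_ℝ { (∂_x² u)²(t,x) − (10/3) (∂_x u)²(t,x) u(t,x) + (5/9) u⁴(t,x) } dx is constant in t ∈ J. -/

import Mathlib

open MeasureTheory Real

/-- The ground state `Q` for (gKdV): `Q(x) = ((p+1)/(2 cosh²(((p−1)/2)x)))^{1/(p−1)}`. -/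
noncomputable def groundState (p : ℕ) (x : ℝ) : ℝ :=
  (((p : ℝ) + 1) / (2 * Real.cosh (((p : ℝ) - 1) / 2 * x) ^ 2)) ^ ((1 : ℝ) / ((p : ℝ) - 1))

/-- The rescaled soliton profile `Q_c(x) = c^{1/(p−1)} Q(√c x)`. -/
noncomputable def solitonProfile (p : ℕ) (c x : ℝ) : ℝ :=
  c ^ ((1 : ℝ) / ((p : ℝ) - 1)) * groundState p (Real.sqrt c * x)

/-- `‖f‖_{H¹} = (∫ (f² + f′²))^{1/2}`. -/
noncomputable def H1norm (f : ℝ → ℝ) : ℝ :=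
  Real.sqrt (∫ x : ℝ, ((f x) ^ 2 + (deriv f x) ^ 2))

/-- `‖f‖_{H^s} = (Σ_{k=0}^s ∫ (f^{(k)})²)^{1/2}`. -/
noncomputable def HsNorm (s : ℕ) (f : ℝ → ℝ) : ℝ :=
  Real.sqrt (∑ k ∈ Finset.range (s + 1), ∫ x : ℝ, (iteratedDeriv k f x) ^ 2)

/-- Membership in `H¹(ℝ)`: `f` and `f′` are in `L²`. -/
def MemH1 (f : ℝ → ℝ) : Prop :=
  MemLp f 2 volume ∧ MemLp (deriv f) 2 volume

/-- `u` is a smooth classical solution of (gKdV) on the time set `J`: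
`∂_t u + ∂_x(∂_x² u + u^p) = 0` pointwise. -/
def IsGKdVSolutionOn (p : ℕ) (J : Set ℝ) (u : ℝ → ℝ → ℝ) : Prop :=
  ContDiff ℝ (⊤ : ℕ∞) (fun q : ℝ × ℝ => u q.1 q.2) ∧
  ∀ t ∈ J, ∀ x : ℝ,
    deriv (fun s => u s x) t
      + deriv (fun y => iteratedDeriv 2 (u t) y + (u t y) ^ p) x = 0


section
open Filter Set

namespace KdVH2Aux

/-- Directional partial derivative of a function on `ℝ × ℝ`. -/
noncomputable def pd (v : ℝ × ℝ) (g : ℝ × ℝ → ℝ) : ℝ × ℝ → ℝ :=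
  fun p => fderiv ℝ g p v

lemma wtop_le : ∀ n : ℕ∞, ((n : WithTop ℕ∞)) ≤ ((⊤ : ℕ∞) : WithTop ℕ∞) :=
  fun n => WithTop.coe_le_coe.mpr le_top

lemma one_le_wtop : (1 : WithTop ℕ∞) ≤ ((⊤ : ℕ∞) : WithTop ℕ∞) := by norm_num

lemma two_le_wtop : (2 : WithTop ℕ∞) ≤ ((⊤ : ℕ∞) : WithTop ℕ∞) := by
  simpa using wtop_le 2

lemma top_add_one_le : ((⊤ : ℕ∞) : WithTop ℕ∞) + 1 ≤ ((⊤ : ℕ∞) : WithTop ℕ∞) := by norm_num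

lemma pd_eq_comp (v : ℝ × ℝ) (g : ℝ × ℝ → ℝ) :
    pd v g = (ContinuousLinearMap.apply ℝ ℝ v) ∘ (fderiv ℝ g) := rfl

lemma contDiff_pd (v : ℝ × ℝ) {g : ℝ × ℝ → ℝ} (hg : ContDiff ℝ (⊤ : ℕ∞) g) :
    ContDiff ℝ (⊤ : ℕ∞) (pd v g) := by
  rw [pd_eq_comp]
  exact (ContinuousLinearMap.apply ℝ ℝ v).contDiff.comp (hg.fderiv_right top_add_one_le)

/-- Spatial and temporal directions. -/
noncomputable def pdx : (ℝ × ℝ → ℝ) → ℝ × ℝ → ℝ := pd (0, 1)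
noncomputable def pdt : (ℝ × ℝ → ℝ) → ℝ × ℝ → ℝ := pd (1, 0)

lemma contDiff_pdx {g : ℝ × ℝ → ℝ} (hg : ContDiff ℝ (⊤ : ℕ∞) g) :
    ContDiff ℝ (⊤ : ℕ∞) (pdx g) := contDiff_pd _ hg

lemma contDiff_pdt {g : ℝ × ℝ → ℝ} (hg : ContDiff ℝ (⊤ : ℕ∞) g) :
    ContDiff ℝ (⊤ : ℕ∞) (pdt g) := contDiff_pd _ hg

lemma contDiff_pdx_iter {g : ℝ × ℝ → ℝ} (hg : ContDiff ℝ (⊤ : ℕ∞) g) (k : ℕ) :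
    ContDiff ℝ (⊤ : ℕ∞) (pdx^[k] g) := by
  induction k generalizing g with
  | zero => exact hg
  | succ k ih => rw [Function.iterate_succ_apply]; exact ih (contDiff_pdx hg)

/-- Slice derivative in the space variable. -/
lemma hasDerivAt_slice_x {g : ℝ × ℝ → ℝ} (hg : ContDiff ℝ (⊤ : ℕ∞) g) (t x : ℝ) :
    HasDerivAt (fun y => g (t, y)) (pdx g (t, x)) x := by
  have h1 : HasDerivAt (fun y : ℝ => ((t, y) : ℝ × ℝ)) (((0 : ℝ), (1 : ℝ)) : ℝ × ℝ) x :=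
    (hasDerivAt_const x t).prodMk (hasDerivAt_id x)
  exact ((hg.differentiable (by simp)).differentiableAt.hasFDerivAt).comp_hasDerivAt x h1

/-- Slice derivative in the time variable. -/
lemma hasDerivAt_slice_t {g : ℝ × ℝ → ℝ} (hg : ContDiff ℝ (⊤ : ℕ∞) g) (t x : ℝ) :
    HasDerivAt (fun s => g (s, x)) (pdt g (t, x)) t := by
  have h1 : HasDerivAt (fun s : ℝ => ((s, x) : ℝ × ℝ)) (((1 : ℝ), (0 : ℝ)) : ℝ × ℝ) t :=
    (hasDerivAt_id t).prodMk (hasDerivAt_const t x)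
  exact ((hg.differentiable (by simp)).differentiableAt.hasFDerivAt).comp_hasDerivAt t h1

lemma iteratedDeriv_slice {g : ℝ × ℝ → ℝ} (hg : ContDiff ℝ (⊤ : ℕ∞) g) (k : ℕ) (t x : ℝ) :
    iteratedDeriv k (fun y => g (t, y)) x = pdx^[k] g (t, x) := by
  induction k generalizing g with
  | zero => simp
  | succ k ih =>
    rw [iteratedDeriv_succ']
    have hd : deriv (fun y => g (t, y)) = fun y => pdx g (t, y) :=
      funext fun y => (hasDerivAt_slice_x hg t y).deriv
    rw [hd, ih (contDiff_pdx hg), Function.iterate_succ_apply]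

/-- Clairaut / symmetry of second derivatives for the two directions. -/
lemma pd_comm {g : ℝ × ℝ → ℝ} (hg : ContDiff ℝ (⊤ : ℕ∞) g) (v w : ℝ × ℝ) (p : ℝ × ℝ) :
    pd v (pd w g) p = pd w (pd v g) p := by
  have hsym : IsSymmSndFDerivAt ℝ g p :=
    (hg.contDiffAt).isSymmSndFDerivAt (by simpa using two_le_wtop)
  have hfd : ∀ z : ℝ × ℝ, fderiv ℝ (pd z g) p
      = (ContinuousLinearMap.apply ℝ ℝ z).comp (fderiv ℝ (fderiv ℝ g) p) := by
    intro z
    have hdiff : DifferentiableAt ℝ (fderiv ℝ g) p :=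
      ((hg.fderiv_right top_add_one_le).differentiable (by simp)).differentiableAt
    exact ((ContinuousLinearMap.apply ℝ ℝ z).hasFDerivAt.comp p hdiff.hasFDerivAt).fderiv
  show fderiv ℝ (pd w g) p v = fderiv ℝ (pd v g) p w
  rw [hfd v, hfd w]
  exact hsym v w

lemma pdt_pdx_iter {g : ℝ × ℝ → ℝ} (hg : ContDiff ℝ (⊤ : ℕ∞) g) (k : ℕ) :
    pdt (pdx^[k] g) = pdx^[k] (pdt g) := by
  induction k generalizing g with
  | zero => rfl
  | succ k ih =>
    rw [Function.iterate_succ_apply, ih (contDiff_pdx hg),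
      Function.iterate_succ_apply]
    congr 1
    exact funext fun p => pd_comm hg _ _ p

lemma pdx_iter_apply_eq {g : ℝ × ℝ → ℝ} (hg : ContDiff ℝ (⊤ : ℕ∞) g) (k : ℕ) (p : ℝ × ℝ) :
    pdx^[k] g p = iteratedFDeriv ℝ k g p (fun _ => ((0 : ℝ), (1 : ℝ))) := by
  induction k generalizing g with
  | zero => simp
  | succ k ih =>
    rw [Function.iterate_succ_apply, ih (contDiff_pdx hg)]
    have : pdx g = (ContinuousLinearMap.apply ℝ ℝ ((0 : ℝ), (1 : ℝ))) ∘ (fderiv ℝ g) := rfl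
    rw [this, ContinuousLinearMap.iteratedFDeriv_comp_left _ (hg.fderiv_right top_add_one_le).contDiffAt (wtop_le _)]
    rw [iteratedFDeriv_succ_apply_right]
    rfl

lemma norm_prod_dir : ‖(((0 : ℝ), (1 : ℝ)) : ℝ × ℝ)‖ = 1 := by
  simp [Prod.norm_def]

lemma abs_pdx_iter_le {g : ℝ × ℝ → ℝ} (hg : ContDiff ℝ (⊤ : ℕ∞) g) (k : ℕ) (p : ℝ × ℝ) :
    |pdx^[k] g p| ≤ ‖iteratedFDeriv ℝ k g p‖ := by
  rw [pdx_iter_apply_eq hg]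
  calc |iteratedFDeriv ℝ k g p (fun _ => ((0 : ℝ), (1 : ℝ)))|
      ≤ ‖iteratedFDeriv ℝ k g p‖ * ∏ _i : Fin k, ‖(((0 : ℝ), (1 : ℝ)) : ℝ × ℝ)‖ :=
        (iteratedFDeriv ℝ k g p).le_opNorm _
    _ = ‖iteratedFDeriv ℝ k g p‖ := by simp [norm_prod_dir]

lemma norm_apply_dir_le (v : ℝ × ℝ) :
    ‖ContinuousLinearMap.apply ℝ ℝ v‖ ≤ ‖v‖ :=
  ContinuousLinearMap.opNorm_le_bound _ (norm_nonneg v)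
    (fun L => by rw [mul_comm]; exact L.le_opNorm v)

lemma abs_pdx_iter_pdt_le {g : ℝ × ℝ → ℝ} (hg : ContDiff ℝ (⊤ : ℕ∞) g) (k : ℕ) (p : ℝ × ℝ) :
    |pdx^[k] (pdt g) p| ≤ ‖iteratedFDeriv ℝ (k + 1) g p‖ := by
  have h1 : |pdx^[k] (pdt g) p| ≤ ‖iteratedFDeriv ℝ k (pdt g) p‖ :=
    abs_pdx_iter_le (contDiff_pdt hg) k p
  have h2 : pdt g = (ContinuousLinearMap.apply ℝ ℝ ((1 : ℝ), (0 : ℝ))) ∘ (fderiv ℝ g) := rfl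
  rw [h2, ContinuousLinearMap.iteratedFDeriv_comp_left _ (hg.fderiv_right top_add_one_le).contDiffAt (wtop_le _)] at h1
  refine h1.trans ?_
  calc ‖(ContinuousLinearMap.apply ℝ ℝ ((1 : ℝ), (0 : ℝ))).compContinuousMultilinearMap
        (iteratedFDeriv ℝ k (fderiv ℝ g) p)‖
      ≤ ‖ContinuousLinearMap.apply ℝ ℝ (((1 : ℝ), (0 : ℝ)) : ℝ × ℝ)‖
          * ‖iteratedFDeriv ℝ k (fderiv ℝ g) p‖ :=
        ContinuousLinearMap.norm_compContinuousMultilinearMap_le _ _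
    _ ≤ 1 * ‖iteratedFDeriv ℝ k (fderiv ℝ g) p‖ := by
        gcongr
        · exact (norm_apply_dir_le _).trans (by simp [Prod.norm_def])
    _ = ‖iteratedFDeriv ℝ (k + 1) g p‖ := by rw [one_mul, norm_iteratedFDeriv_fderiv]


lemma tendsto_env_atTop (C : ℝ) : Tendsto (fun x : ℝ => C / (1 + x ^ 2)) atTop (nhds 0) := by
  have h1 : Tendsto (fun x : ℝ => 1 + x ^ 2) atTop atTop :=
    tendsto_atTop_add_const_left _ 1 (tendsto_pow_atTop two_ne_zero)
  exact Tendsto.div_atTop tendsto_const_nhds h1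

lemma tendsto_env_atBot (C : ℝ) : Tendsto (fun x : ℝ => C / (1 + x ^ 2)) atBot (nhds 0) := by
  have h0 : Tendsto (fun x : ℝ => -x) atBot atTop := tendsto_neg_atBot_atTop
  have := (tendsto_env_atTop C).comp h0
  simpa [Function.comp_def, neg_sq] using this

lemma tendsto_zero_of_env {g : ℝ → ℝ} {C : ℝ} (h : ∀ x, |g x| ≤ C / (1 + x ^ 2)) :
    Tendsto g atTop (nhds 0) ∧ Tendsto g atBot (nhds 0) := by
  constructor
  · exact squeeze_zero_norm (fun x => h x) (tendsto_env_atTop C)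
  · exact squeeze_zero_norm (fun x => h x) (tendsto_env_atBot C)

lemma integrable_env (C : ℝ) : Integrable (fun x : ℝ => C / (1 + x ^ 2)) := by
  simpa [div_eq_mul_inv, mul_comm] using (integrable_inv_one_add_sq).const_mul C

lemma integrable_of_env {g : ℝ → ℝ} {C : ℝ} (hg : AEStronglyMeasurable g volume)
    (h : ∀ x, |g x| ≤ C / (1 + x ^ 2)) : Integrable g :=
  (integrable_env C).mono' hg (Filter.Eventually.of_forall fun x => h x)

/-- The integral over `ℝ` of the derivative of a function vanishing at `±∞` is zero. -/
lemma integral_deriv_eq_zero' {g g' : ℝ → ℝ} (hg : ∀ x, HasDerivAt g (g' x) x)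
    (hint : Integrable g') (htop : Tendsto g atTop (nhds 0))
    (hbot : Tendsto g atBot (nhds 0)) : ∫ x : ℝ, g' x = 0 := by
  have h1 : Tendsto (fun R : ℝ => ∫ x in (-R)..R, g' x) atTop (nhds (∫ x : ℝ, g' x)) :=
    intervalIntegral_tendsto_integral hint tendsto_neg_atTop_atBot tendsto_id
  have h2 : ∀ R : ℝ, (∫ x in (-R)..R, g' x) = g R - g (-R) := fun R =>
    intervalIntegral.integral_eq_sub_of_hasDerivAt (fun y _ => hg y)
      hint.intervalIntegrable
  have h3 : Tendsto (fun R : ℝ => g R - g (-R)) atTop (nhds 0) := by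
    simpa using htop.sub (hbot.comp tendsto_neg_atTop_atBot)
  exact tendsto_nhds_unique (h1.congr (fun R => h2 R)) h3


section EnvBounds

lemma sup_of_env {f C x : ℝ} (hC : 0 ≤ C) (h : |f| ≤ C / (1 + x ^ 2)) : |f| ≤ C :=
  h.trans (div_le_self hC (by nlinarith [sq_nonneg x]))

lemma env_add' {f g C D x : ℝ} (hf : |f| ≤ C / (1 + x ^ 2)) (hg : |g| ≤ D / (1 + x ^ 2)) :
    |f + g| ≤ (C + D) / (1 + x ^ 2) := by
  rw [add_div]; exact (abs_add_le f g).trans (add_le_add hf hg)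

lemma env_sub' {f g C D x : ℝ} (hf : |f| ≤ C / (1 + x ^ 2)) (hg : |g| ≤ D / (1 + x ^ 2)) :
    |f - g| ≤ (C + D) / (1 + x ^ 2) := by
  rw [sub_eq_add_neg]; exact env_add' hf (by rwa [abs_neg])

lemma env_cmul {f C x : ℝ} (c : ℝ) (hf : |f| ≤ C / (1 + x ^ 2)) :
    |c * f| ≤ (|c| * C) / (1 + x ^ 2) := by
  rw [abs_mul, mul_div_assoc]; exact mul_le_mul_of_nonneg_left hf (abs_nonneg c)

lemma env_smul {f g C D x : ℝ} (hC : 0 ≤ C) (hf : |f| ≤ C) (hg : |g| ≤ D / (1 + x ^ 2)) :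
    |f * g| ≤ (C * D) / (1 + x ^ 2) := by
  rw [abs_mul, mul_div_assoc]
  exact mul_le_mul hf hg (abs_nonneg _) hC

lemma sup_mul' {f g C D : ℝ} (hC : 0 ≤ C) (hf : |f| ≤ C) (hg : |g| ≤ D) : |f * g| ≤ C * D := by
  rw [abs_mul]; exact mul_le_mul hf hg (abs_nonneg _) hC

lemma sup_pow' {f C : ℝ} (hf : |f| ≤ C) (n : ℕ) : |f ^ n| ≤ C ^ n := by
  rw [abs_pow]; exact pow_le_pow_left₀ (abs_nonneg f) hf n

lemma env_pow {f C x : ℝ} (hC : 0 ≤ C) (hfs : |f| ≤ C) (hfe : |f| ≤ C / (1 + x ^ 2)) (n : ℕ) :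
    |f ^ (n + 1)| ≤ (C ^ n * C) / (1 + x ^ 2) := by
  rw [pow_succ]
  exact env_smul (by positivity) (sup_pow' hfs n) hfe

end EnvBounds

end KdVH2Aux


namespace KdVH2Aux

set_option maxHeartbeats 1000000 in
theorem key_aux (J : Set ℝ) (U : ℝ × ℝ → ℝ) (hU : ContDiff ℝ (⊤ : ℕ∞) U)
    (hpde : ∀ t ∈ J, ∀ x : ℝ,
      pdt U (t, x) = -(pdx^[3] U (t, x) + 2 * (U (t, x) * pdx^[1] U (t, x))))
    (hdecay : ∀ n k : ℕ, ∀ t₁ ∈ J, ∀ t₂ ∈ J, ∃ C : ℝ,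
      ∀ t ∈ Set.Icc t₁ t₂, ∀ x : ℝ, |x| ^ k * ‖iteratedFDeriv ℝ n U (t, x)‖ ≤ C)
    (a : ℝ) (ha : a ∈ J) (b : ℝ) (hb : b ∈ J) (hab : a ≤ b) (hIcc : Set.Icc a b ⊆ J) :
    (∫ x : ℝ, (pdx^[2] U (a, x) ^ 2 - (10 / 3) * (pdx^[1] U (a, x) ^ 2 * U (a, x))
        + (5 / 9) * U (a, x) ^ 4)) =
    (∫ x : ℝ, (pdx^[2] U (b, x) ^ 2 - (10 / 3) * (pdx^[1] U (b, x) ^ 2 * U (b, x))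
        + (5 / 9) * U (b, x) ^ 4)) := by
  rcases eq_or_lt_of_le hab with rfl | hlt
  · rfl
  -- basic smoothness
  have hDk : ∀ k : ℕ, ContDiff ℝ (⊤ : ℕ∞) (pdx^[k] U) := contDiff_pdx_iter hU
  have hwsm : ContDiff ℝ (⊤ : ℕ∞) (pdt U) := contDiff_pdt hU
  have hwk : ∀ k : ℕ, ContDiff ℝ (⊤ : ℕ∞) (pdx^[k] (pdt U)) := contDiff_pdx_iter hwsm
  -- spatial slice derivatives
  have hx : ∀ (k : ℕ) (t x : ℝ),
      HasDerivAt (fun y => pdx^[k] U (t, y)) (pdx^[k + 1] U (t, x)) x := by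
    intro k t x
    rw [Function.iterate_succ_apply']
    exact hasDerivAt_slice_x (hDk k) t x
  have hx0 : ∀ t x : ℝ, HasDerivAt (fun y => U (t, y)) (pdx^[1] U (t, x)) x :=
    fun t x => hx 0 t x
  -- time slice derivatives (with Clairaut)
  have hts : ∀ (k : ℕ) (t x : ℝ),
      HasDerivAt (fun s => pdx^[k] U (s, x)) (pdx^[k] (pdt U) (t, x)) t := by
    intro k t x
    have h := hasDerivAt_slice_t (hDk k) t x
    rwa [pdt_pdx_iter hU] at h
  have hts0 : ∀ t x : ℝ, HasDerivAt (fun s => U (s, x)) (pdt U (t, x)) t :=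
    fun t x => hts 0 t x
  -- decay bounds in envelope form
  have hb0 : ∀ n : ℕ, ∃ C : ℝ, 0 ≤ C ∧
      ∀ t ∈ Set.Icc a b, ∀ x : ℝ, |pdx^[n] U (t, x)| ≤ C / (1 + x ^ 2) := by
    intro n
    obtain ⟨C0, hC0⟩ := hdecay n 0 a ha b hb
    obtain ⟨C2, hC2⟩ := hdecay n 2 a ha b hb
    have haIcc : a ∈ Set.Icc a b := ⟨le_rfl, hab⟩
    have hC0n : 0 ≤ C0 := le_trans (by positivity) (hC0 a haIcc 0)
    have hC2n : 0 ≤ C2 := le_trans (by positivity) (hC2 a haIcc 0)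
    refine ⟨C0 + C2, by positivity, fun t ht x => ?_⟩
    have h1 := hC0 t ht x
    have h2 := hC2 t ht x
    have h3 := abs_pdx_iter_le hU n (t, x)
    have hpos : (0 : ℝ) < 1 + x ^ 2 := by positivity
    rw [le_div_iff₀ hpos]
    have hsq : |x| ^ 2 = x ^ 2 := sq_abs x
    have hnn : (0 : ℝ) ≤ ‖iteratedFDeriv ℝ n U (t, x)‖ := norm_nonneg _
    simp only [pow_zero, one_mul] at h1
    nlinarith [abs_nonneg (pdx^[n] U (t, x)), sq_nonneg x,
      mul_le_mul_of_nonneg_left h3 (sq_nonneg x)]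
  have hbw : ∀ n : ℕ, ∃ C : ℝ, 0 ≤ C ∧
      ∀ t ∈ Set.Icc a b, ∀ x : ℝ, |pdx^[n] (pdt U) (t, x)| ≤ C / (1 + x ^ 2) := by
    intro n
    obtain ⟨C0, hC0⟩ := hdecay (n + 1) 0 a ha b hb
    obtain ⟨C2, hC2⟩ := hdecay (n + 1) 2 a ha b hb
    have haIcc : a ∈ Set.Icc a b := ⟨le_rfl, hab⟩
    have hC0n : 0 ≤ C0 := le_trans (by positivity) (hC0 a haIcc 0)
    have hC2n : 0 ≤ C2 := le_trans (by positivity) (hC2 a haIcc 0)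
    refine ⟨C0 + C2, by positivity, fun t ht x => ?_⟩
    have h1 := hC0 t ht x
    have h2 := hC2 t ht x
    have h3 := abs_pdx_iter_pdt_le hU n (t, x)
    have hpos : (0 : ℝ) < 1 + x ^ 2 := by positivity
    rw [le_div_iff₀ hpos]
    have hsq : |x| ^ 2 = x ^ 2 := sq_abs x
    simp only [pow_zero, one_mul] at h1
    nlinarith [abs_nonneg (pdx^[n] (pdt U) (t, x)), sq_nonneg x,
      mul_le_mul_of_nonneg_left h3 (sq_nonneg x)]
  -- extract constants (envelope and sup bounds) for the spatial derivatives
  obtain ⟨K0, K0n, hK0⟩ := hb0 0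
  obtain ⟨K1, K1n, hK1⟩ := hb0 1
  obtain ⟨K2, K2n, hK2⟩ := hb0 2
  obtain ⟨K3, K3n, hK3⟩ := hb0 3
  obtain ⟨K4, K4n, hK4⟩ := hb0 4
  obtain ⟨K5, K5n, hK5⟩ := hb0 5
  obtain ⟨L0, L0n, hL0⟩ := hbw 0
  obtain ⟨L1, L1n, hL1⟩ := hbw 1
  obtain ⟨L2, L2n, hL2⟩ := hbw 2
  have hK0' : ∀ t ∈ Set.Icc a b, ∀ x : ℝ, |U (t, x)| ≤ K0 / (1 + x ^ 2) := by
    intro t ht x; simpa using hK0 t ht x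
  have hL0' : ∀ t ∈ Set.Icc a b, ∀ x : ℝ, |pdt U (t, x)| ≤ L0 / (1 + x ^ 2) := by
    intro t ht x; simpa using hL0 t ht x
  have hL1' : ∀ t ∈ Set.Icc a b, ∀ x : ℝ, |pdx^[1] (pdt U) (t, x)| ≤ L1 / (1 + x ^ 2) :=
    fun t ht x => hL1 t ht x
  -- the energy density and its time derivative
  set Fp : ℝ × ℝ → ℝ := fun p =>
    pdx^[2] U p ^ 2 - 10 / 3 * (pdx^[1] U p ^ 2 * U p) + 5 / 9 * U p ^ 4 with hFp
  set Fp' : ℝ × ℝ → ℝ := fun p =>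
    2 * (pdx^[2] U p * pdx^[2] (pdt U) p)
      - 10 / 3 * (2 * (pdx^[1] U p * (pdx^[1] (pdt U) p * U p)) + pdx^[1] U p ^ 2 * pdt U p)
      + 20 / 9 * (U p ^ 3 * pdt U p) with hFp'
  have hUc : Continuous U := hU.continuous
  have hFpc : Continuous Fp := by
    rw [hFp]
    exact (((hDk 2).continuous.pow 2).sub
      (continuous_const.mul (((hDk 1).continuous.pow 2).mul hUc))).add
      (continuous_const.mul (hUc.pow 4))
  have hFp'c : Continuous Fp' := by
    rw [hFp']
    exact ((continuous_const.mul ((hDk 2).continuous.mul (hwk 2).continuous)).sub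
      (continuous_const.mul ((continuous_const.mul ((hDk 1).continuous.mul
        ((hwk 1).continuous.mul hUc))).add
        (((hDk 1).continuous.pow 2).mul hwsm.continuous)))).add
      (continuous_const.mul ((hUc.pow 3).mul hwsm.continuous))
  have hmeas : ∀ t : ℝ, AEStronglyMeasurable (fun x => Fp (t, x)) volume := fun t =>
    (hFpc.comp (continuous_const.prodMk continuous_id)).aestronglyMeasurable
  have hmeas' : ∀ t : ℝ, AEStronglyMeasurable (fun x => Fp' (t, x)) volume := fun t =>
    (hFp'c.comp (continuous_const.prodMk continuous_id)).aestronglyMeasurable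
  -- envelope bound for the density
  obtain ⟨MF, hMF⟩ : ∃ M : ℝ, ∀ t ∈ Set.Icc a b, ∀ x : ℝ, |Fp (t, x)| ≤ M / (1 + x ^ 2) := by
    refine ⟨K2 ^ 1 * K2 + |(10 : ℝ) / 3| * (K1 ^ 2 * K0) + |(5 : ℝ) / 9| * (K0 ^ 3 * K0),
      fun t ht x => ?_⟩
    rw [hFp]
    refine env_add' (env_sub' ?_ ?_) ?_
    · exact env_pow K2n (sup_of_env K2n (hK2 t ht x)) (hK2 t ht x) 1
    · exact env_cmul _ (env_smul (by positivity)
        (sup_pow' (sup_of_env K1n (hK1 t ht x)) 2) (hK0' t ht x))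
    · exact env_cmul _ (env_pow K0n (sup_of_env K0n (hK0' t ht x)) (hK0' t ht x) 3)
  -- envelope bound for the time derivative of the density
  obtain ⟨MF', hMF'⟩ : ∃ M : ℝ, ∀ t ∈ Set.Icc a b, ∀ x : ℝ, |Fp' (t, x)| ≤ M / (1 + x ^ 2) := by
    refine ⟨|(2 : ℝ)| * (K2 * L2)
      + |(10 : ℝ) / 3| * (|(2 : ℝ)| * (K1 * (L1 * K0)) + K1 ^ 2 * L0)
      + |(20 : ℝ) / 9| * (K0 ^ 3 * L0), fun t ht x => ?_⟩
    rw [hFp']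
    refine env_add' (env_sub' ?_ ?_) ?_
    · exact env_cmul _ (env_smul K2n (sup_of_env K2n (hK2 t ht x)) (hL2 t ht x))
    · refine env_cmul _ (env_add' ?_ ?_)
      · exact env_cmul _ (env_smul K1n (sup_of_env K1n (hK1 t ht x))
          (env_smul L1n (sup_of_env L1n (hL1' t ht x)) (hK0' t ht x)))
      · exact env_smul (by positivity) (sup_pow' (sup_of_env K1n (hK1 t ht x)) 2)
          (hL0' t ht x)
    · exact env_cmul _ (env_smul (by positivity)
        (sup_pow' (sup_of_env K0n (hK0' t ht x)) 3) (hL0' t ht x))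
  -- time derivative of the density
  have hFt : ∀ t x : ℝ, HasDerivAt (fun s => Fp (s, x)) (Fp' (t, x)) t := by
    intro t x
    simp only [hFp, hFp']
    have chain := (((hts 2 t x).pow 2).sub
      ((((hts 1 t x).pow 2).mul (hts0 t x)).const_mul (10 / 3))).add
      (((hts0 t x).pow 4).const_mul (5 / 9))
    refine chain.congr_deriv ?_
    simp only [Pi.pow_apply, Pi.mul_apply]
    push_cast
    ring
  -- the substituted time derivative functions
  set Wf : ℝ × ℝ → ℝ := fun p => -(pdx^[3] U p + 2 * (U p * pdx^[1] U p)) with hWf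
  set W1f : ℝ × ℝ → ℝ := fun p =>
    -(pdx^[4] U p + 2 * (pdx^[1] U p * pdx^[1] U p + U p * pdx^[2] U p)) with hW1f
  set W2f : ℝ × ℝ → ℝ := fun p =>
    -(pdx^[5] U p + (6 * (pdx^[1] U p * pdx^[2] U p) + 2 * (U p * pdx^[3] U p))) with hW2f
  have hWsm : ContDiff ℝ (⊤ : ℕ∞) Wf := by
    rw [hWf]
    exact ((hDk 3).add (contDiff_const.mul (hU.mul (hDk 1)))).neg
  have hW1sm : ContDiff ℝ (⊤ : ℕ∞) W1f := by
    rw [hW1f]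
    exact ((hDk 4).add (contDiff_const.mul (((hDk 1).mul (hDk 1)).add
      (hU.mul (hDk 2))))).neg
  have hWx : ∀ t x : ℝ, pdx Wf (t, x) = W1f (t, x) := by
    intro t x
    have chain : HasDerivAt (fun y => Wf (t, y)) (W1f (t, x)) x := by
      simp only [hWf, hW1f]
      exact ((hx 3 t x).add (((hx0 t x).mul (hx 1 t x)).const_mul 2)).neg
    exact (hasDerivAt_slice_x hWsm t x).unique chain
  have hWx' : pdx Wf = W1f := funext fun p => hWx p.1 p.2
  have hW1x : ∀ t x : ℝ, pdx W1f (t, x) = W2f (t, x) := by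
    intro t x
    have chain0 : HasDerivAt (fun y => W1f (t, y))
        (-(pdx^[5] U (t, x) + 2 * ((pdx^[2] U (t, x) * pdx^[1] U (t, x)
          + pdx^[1] U (t, x) * pdx^[2] U (t, x))
          + (pdx^[1] U (t, x) * pdx^[2] U (t, x) + U (t, x) * pdx^[3] U (t, x))))) x := by
      simp only [hW1f]
      exact ((hx 4 t x).add ((((hx 1 t x).mul (hx 1 t x)).add
        ((hx0 t x).mul (hx 2 t x))).const_mul 2)).neg
    have chain : HasDerivAt (fun y => W1f (t, y)) (W2f (t, x)) x := by
      convert chain0 using 1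
      simp only [hW2f]
      ring
    exact (hasDerivAt_slice_x hW1sm t x).unique chain
  -- the flux function and its spatial derivative
  set Gf : ℝ × ℝ → ℝ := fun p =>
    -2 * (pdx^[2] U p * pdx^[4] U p) + pdx^[3] U p ^ 2
      - 16 / 3 * (U p * pdx^[2] U p ^ 2) - 10 / 3 * (pdx^[1] U p ^ 2 * pdx^[2] U p)
      + 20 / 3 * (U p * (pdx^[1] U p * pdx^[3] U p)) - 20 / 9 * (U p ^ 3 * pdx^[2] U p)
      + 10 * (U p ^ 2 * pdx^[1] U p ^ 2) - 8 / 9 * U p ^ 5 with hGf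
  set Pf : ℝ × ℝ → ℝ := fun p =>
    -2 * (pdx^[2] U p * pdx^[5] U p) - 12 * (pdx^[1] U p * pdx^[2] U p ^ 2)
      - 4 * (U p * (pdx^[2] U p * pdx^[3] U p)) + 10 / 3 * (pdx^[1] U p ^ 2 * pdx^[3] U p)
      + 20 / 3 * (U p * (pdx^[1] U p * pdx^[4] U p))
      + 40 / 3 * (U p ^ 2 * (pdx^[1] U p * pdx^[2] U p))
      - 20 / 9 * (U p ^ 3 * pdx^[3] U p) + 20 * (U p * pdx^[1] U p ^ 3)
      - 40 / 9 * (U p ^ 4 * pdx^[1] U p) with hPf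
  have hGsm : ContDiff ℝ (⊤ : ℕ∞) Gf := by
    rw [hGf]
    exact (((((((contDiff_const.mul ((hDk 2).mul (hDk 4))).add ((hDk 3).pow 2)).sub
      (contDiff_const.mul (hU.mul ((hDk 2).pow 2)))).sub
      (contDiff_const.mul (((hDk 1).pow 2).mul (hDk 2)))).add
      (contDiff_const.mul (hU.mul ((hDk 1).mul (hDk 3))))).sub
      (contDiff_const.mul ((hU.pow 3).mul (hDk 2)))).add
      (contDiff_const.mul ((hU.pow 2).mul ((hDk 1).pow 2)))).sub
      (contDiff_const.mul (hU.pow 5))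
  have hGP : ∀ t x : ℝ, HasDerivAt (fun y => Gf (t, y)) (Pf (t, x)) x := by
    intro t x
    simp only [hGf]
    have m1 := ((hx 2 t x).mul (hx 4 t x)).const_mul (-2 : ℝ)
    have m2 := (hx 3 t x).pow 2
    have m3 := ((hx0 t x).mul ((hx 2 t x).pow 2)).const_mul (16 / 3 : ℝ)
    have m4 := (((hx 1 t x).pow 2).mul (hx 2 t x)).const_mul (10 / 3 : ℝ)
    have m5 := ((hx0 t x).mul ((hx 1 t x).mul (hx 3 t x))).const_mul (20 / 3 : ℝ)
    have m6 := (((hx0 t x).pow 3).mul (hx 2 t x)).const_mul (20 / 9 : ℝ)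
    have m7 := (((hx0 t x).pow 2).mul ((hx 1 t x).pow 2)).const_mul (10 : ℝ)
    have m8 := ((hx0 t x).pow 5).const_mul (8 / 9 : ℝ)
    have chain := ((((((m1.add m2).sub m3).sub m4).add m5).sub m6).add m7).sub m8
    refine chain.congr_deriv ?_
    simp only [hPf, Pi.pow_apply, Pi.mul_apply]
    push_cast
    ring
  have hpxG : ∀ t x : ℝ, pdx Gf (t, x) = Pf (t, x) := fun t x =>
    (hasDerivAt_slice_x hGsm t x).unique (hGP t x)
  -- envelope bounds for the flux function and its spatial derivative
  obtain ⟨MG, hMG⟩ : ∃ M : ℝ, ∀ t ∈ Set.Icc a b, ∀ x : ℝ, |Gf (t, x)| ≤ M / (1 + x ^ 2) := by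
    refine ⟨|(-2 : ℝ)| * (K2 * K4) + K3 ^ 1 * K3 + |(16 : ℝ) / 3| * (K0 * (K2 ^ 1 * K2))
      + |(10 : ℝ) / 3| * (K1 ^ 2 * K2) + |(20 : ℝ) / 3| * (K0 * (K1 * K3))
      + |(20 : ℝ) / 9| * (K0 ^ 3 * K2) + |(10 : ℝ)| * (K0 ^ 2 * (K1 ^ 1 * K1))
      + |(8 : ℝ) / 9| * (K0 ^ 4 * K0), fun t ht x => ?_⟩
    rw [hGf]
    refine env_sub' (env_add' (env_sub' (env_add' (env_sub' (env_sub' (env_add' ?_ ?_) ?_) ?_)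
      ?_) ?_) ?_) ?_
    · exact env_cmul _ (env_smul K2n (sup_of_env K2n (hK2 t ht x)) (hK4 t ht x))
    · exact env_pow K3n (sup_of_env K3n (hK3 t ht x)) (hK3 t ht x) 1
    · exact env_cmul _ (env_smul K0n (sup_of_env K0n (hK0' t ht x))
        (env_pow K2n (sup_of_env K2n (hK2 t ht x)) (hK2 t ht x) 1))
    · exact env_cmul _ (env_smul (by positivity) (sup_pow' (sup_of_env K1n (hK1 t ht x)) 2)
        (hK2 t ht x))
    · exact env_cmul _ (env_smul K0n (sup_of_env K0n (hK0' t ht x))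
        (env_smul K1n (sup_of_env K1n (hK1 t ht x)) (hK3 t ht x)))
    · exact env_cmul _ (env_smul (by positivity) (sup_pow' (sup_of_env K0n (hK0' t ht x)) 3)
        (hK2 t ht x))
    · exact env_cmul _ (env_smul (by positivity) (sup_pow' (sup_of_env K0n (hK0' t ht x)) 2)
        (env_pow K1n (sup_of_env K1n (hK1 t ht x)) (hK1 t ht x) 1))
    · exact env_cmul _ (env_pow K0n (sup_of_env K0n (hK0' t ht x)) (hK0' t ht x) 4)
  obtain ⟨MP, hMP⟩ : ∃ M : ℝ, ∀ t ∈ Set.Icc a b, ∀ x : ℝ, |Pf (t, x)| ≤ M / (1 + x ^ 2) := by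
    refine ⟨|(-2 : ℝ)| * (K2 * K5) + |(12 : ℝ)| * (K1 * (K2 ^ 1 * K2))
      + |(4 : ℝ)| * (K0 * (K2 * K3)) + |(10 : ℝ) / 3| * (K1 ^ 2 * K3)
      + |(20 : ℝ) / 3| * (K0 * (K1 * K4)) + |(40 : ℝ) / 3| * (K0 ^ 2 * (K1 * K2))
      + |(20 : ℝ) / 9| * (K0 ^ 3 * K3) + |(20 : ℝ)| * (K0 * (K1 ^ 2 * K1))
      + |(40 : ℝ) / 9| * (K0 ^ 4 * K1), fun t ht x => ?_⟩
    rw [hPf]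
    refine env_sub' (env_add' (env_sub' (env_add' (env_add' (env_add' (env_sub' (env_sub' ?_ ?_)
      ?_) ?_) ?_) ?_) ?_) ?_) ?_
    · exact env_cmul _ (env_smul K2n (sup_of_env K2n (hK2 t ht x)) (hK5 t ht x))
    · exact env_cmul _ (env_smul K1n (sup_of_env K1n (hK1 t ht x))
        (env_pow K2n (sup_of_env K2n (hK2 t ht x)) (hK2 t ht x) 1))
    · exact env_cmul _ (env_smul K0n (sup_of_env K0n (hK0' t ht x))
        (env_smul K2n (sup_of_env K2n (hK2 t ht x)) (hK3 t ht x)))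
    · exact env_cmul _ (env_smul (by positivity) (sup_pow' (sup_of_env K1n (hK1 t ht x)) 2)
        (hK3 t ht x))
    · exact env_cmul _ (env_smul K0n (sup_of_env K0n (hK0' t ht x))
        (env_smul K1n (sup_of_env K1n (hK1 t ht x)) (hK4 t ht x)))
    · exact env_cmul _ (env_smul (by positivity) (sup_pow' (sup_of_env K0n (hK0' t ht x)) 2)
        (env_smul K1n (sup_of_env K1n (hK1 t ht x)) (hK2 t ht x)))
    · exact env_cmul _ (env_smul (by positivity) (sup_pow' (sup_of_env K0n (hK0' t ht x)) 3)
        (hK3 t ht x))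
    · exact env_cmul _ (env_smul K0n (sup_of_env K0n (hK0' t ht x))
        (env_pow K1n (sup_of_env K1n (hK1 t ht x)) (hK1 t ht x) 2))
    · exact env_cmul _ (env_smul (by positivity) (sup_pow' (sup_of_env K0n (hK0' t ht x)) 4)
        (hK1 t ht x))
  -- the energy as a function of time
  set E : ℝ → ℝ := fun t => ∫ x : ℝ, Fp (t, x) with hE
  -- E has zero derivative in the interior
  have hE'zero : ∀ t₀ ∈ Set.Ioo a b, HasDerivAt E 0 t₀ := by
    intro t₀ ht₀
    have ht₀I : t₀ ∈ Set.Icc a b := Set.Ioo_subset_Icc_self ht₀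
    have ht₀J : t₀ ∈ J := hIcc ht₀I
    have hεpos : 0 < min (t₀ - a) (b - t₀) := lt_min (by linarith [ht₀.1]) (by linarith [ht₀.2])
    have hball : Metric.ball t₀ (min (t₀ - a) (b - t₀)) ⊆ Set.Icc a b := by
      intro y hy
      rw [Real.ball_eq_Ioo] at hy
      constructor
      · have h1 := min_le_left (t₀ - a) (b - t₀); have h2 := hy.1; linarith
      · have h1 := min_le_right (t₀ - a) (b - t₀); have h2 := hy.2; linarith
    have main := (hasDerivAt_integral_of_dominated_loc_of_deriv_le (μ := volume)
      (F := fun t x => Fp (t, x)) (F' := fun t x => Fp' (t, x))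
      (bound := fun x => MF' / (1 + x ^ 2)) (Metric.ball_mem_nhds t₀ hεpos)
      (Eventually.of_forall hmeas)
      (integrable_of_env (hmeas t₀) (fun x => hMF t₀ ht₀I x))
      (hmeas' t₀)
      (Eventually.of_forall fun x t htb => by
        simpa [Real.norm_eq_abs] using hMF' t (hball htb) x)
      (integrable_env MF')
      (Eventually.of_forall fun x t _ => hFt t x)).2
    -- identify the derivative with zero
    have hsubW : ∀ y : ℝ, pdt U (t₀, y) = Wf (t₀, y) := by
      intro y; rw [hWf]; exact hpde t₀ ht₀J y
    have hkW : ∀ (k : ℕ) (y : ℝ), pdx^[k] (pdt U) (t₀, y) = pdx^[k] Wf (t₀, y) := by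
      intro k y
      rw [← iteratedDeriv_slice hwsm k t₀ y, ← iteratedDeriv_slice hWsm k t₀ y]
      congr 1
      funext z
      exact hsubW z
    have hw1 : ∀ y : ℝ, pdx^[1] (pdt U) (t₀, y) = W1f (t₀, y) := by
      intro y; rw [hkW 1 y, Function.iterate_one]; exact hWx t₀ y
    have hw2 : ∀ y : ℝ, pdx^[2] (pdt U) (t₀, y) = W2f (t₀, y) := by
      intro y
      rw [hkW 2 y]
      have h2 : pdx^[2] Wf (t₀, y) = pdx (pdx Wf) (t₀, y) := rfl
      rw [h2, hWx']
      exact hW1x t₀ y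
    have hFP : ∀ x : ℝ, Fp' (t₀, x) = Pf (t₀, x) := by
      intro x
      simp only [hFp']
      rw [hw2 x, hw1 x, hsubW x]
      simp only [hWf, hW1f, hW2f, hPf]
      ring
    have heq : (fun x => Fp' (t₀, x)) = fun x => pdx Gf (t₀, x) :=
      funext fun x => (hFP x).trans (hpxG t₀ x).symm
    have hzero : (∫ x : ℝ, Fp' (t₀, x)) = 0 := by
      rw [heq]
      refine integral_deriv_eq_zero' (fun x => hasDerivAt_slice_x hGsm t₀ x) ?_ ?_ ?_
      · refine integrable_of_env (C := MP) (((contDiff_pdx hGsm).continuous.comp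
          (continuous_const.prodMk continuous_id)).aestronglyMeasurable) (fun x => ?_)
        rw [hpxG t₀ x]
        exact hMP t₀ ht₀I x
      · exact (tendsto_zero_of_env (fun x => hMG t₀ ht₀I x)).1
      · exact (tendsto_zero_of_env (fun x => hMG t₀ ht₀I x)).2
    rw [hzero] at main
    exact main
  -- E is continuous on [a, b]
  have hcontE : ∀ t₀ ∈ Set.Icc a b, ContinuousWithinAt E (Set.Icc a b) t₀ := by
    intro t₀ ht₀
    refine continuousWithinAt_of_dominated (bound := fun x => MF / (1 + x ^ 2))
      (Eventually.of_forall hmeas) ?_ (integrable_env MF) ?_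
    · exact eventually_mem_nhdsWithin.mono fun t ht =>
        Eventually.of_forall fun x => by simpa [Real.norm_eq_abs] using hMF t ht x
    · exact Eventually.of_forall fun x =>
        ((hFpc.comp (continuous_id.prodMk continuous_const)).continuousAt).continuousWithinAt
  -- E is constant on (a, b], by the mean value inequality
  have hconst : ∀ s ∈ Set.Ioo a b, E s = E b := by
    intro s hs
    have hsub : Set.Icc s b ⊆ Set.Icc a b := Set.Icc_subset_Icc (le_of_lt hs.1) le_rfl
    have h := constant_of_has_deriv_right_zero (f := E) (a := s) (b := b)
      (fun y hy => (hcontE y (hsub hy)).mono hsub)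
      (fun y hy => (hE'zero y ⟨lt_of_lt_of_le hs.1 hy.1, hy.2⟩).hasDerivWithinAt)
    exact (h b ⟨le_of_lt hs.2, le_rfl⟩).symm
  -- pass to the limit s → a⁺
  have hne : (nhdsWithin a (Set.Ioo a b)).NeBot := by
    refine mem_closure_iff_nhdsWithin_neBot.mp ?_
    rw [closure_Ioo (ne_of_lt hlt)]
    exact ⟨le_rfl, hab⟩
  have h1 : Tendsto E (nhdsWithin a (Set.Ioo a b)) (nhds (E a)) :=
    (hcontE a ⟨le_rfl, hab⟩).mono Set.Ioo_subset_Icc_self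
  have h2 : Tendsto E (nhdsWithin a (Set.Ioo a b)) (nhds (E b)) := by
    refine Tendsto.congr' ?_ tendsto_const_nhds
    exact eventually_mem_nhdsWithin.mono fun s hs => (hconst s hs).symm
  exact tendsto_nhds_unique h1 h2

end KdVH2Aux


open KdVH2Aux in
/-- conservation of the second-order energy
`∫ (∂_x²u)² − (10/3)(∂_xu)²u + (5/9)u⁴ dx` for Schwartz solutions of (KdV). -/
theorem kdv_H2_conservation_law
    (J : Set ℝ) (hJ : J.OrdConnected)
    (u : ℝ → ℝ → ℝ) (hu : IsGKdVSolutionOn 2 J u)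
    -- all partial derivatives decay in x faster than any polynomial,
    -- locally uniformly in t
    (hdecay : ∀ n k : ℕ, ∀ t₁ ∈ J, ∀ t₂ ∈ J, ∃ C : ℝ,
      ∀ t ∈ Set.Icc t₁ t₂, ∀ x : ℝ,
        |x| ^ k * ‖iteratedFDeriv ℝ n (fun q : ℝ × ℝ => u q.1 q.2) (t, x)‖ ≤ C) :
    ∀ t₁ ∈ J, ∀ t₂ ∈ J,
      (∫ x : ℝ, ((iteratedDeriv 2 (u t₁) x) ^ 2
          - (10 / 3) * (deriv (u t₁) x) ^ 2 * u t₁ x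
          + (5 / 9) * (u t₁ x) ^ 4)) =
      (∫ x : ℝ, ((iteratedDeriv 2 (u t₂) x) ^ 2
          - (10 / 3) * (deriv (u t₂) x) ^ 2 * u t₂ x
          + (5 / 9) * (u t₂ x) ^ 4)) := by
  obtain ⟨hUsm, hpde0⟩ := hu
  set U : ℝ × ℝ → ℝ := fun q : ℝ × ℝ => u q.1 q.2 with hUdef
  have hU : ContDiff ℝ (⊤ : ℕ∞) U := hUsm.of_le (by simp)
  -- convert the PDE to directional-derivative form
  have hpde : ∀ t ∈ J, ∀ x : ℝ,
      pdt U (t, x) = -(pdx^[3] U (t, x) + 2 * (U (t, x) * pdx^[1] U (t, x))) := by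
    intro t ht x
    have h0 := hpde0 t ht x
    have e1 : deriv (fun s => u s x) t = pdt U (t, x) :=
      (hasDerivAt_slice_t hU t x).deriv
    have e2 : iteratedDeriv 2 (u t) = fun y => pdx^[2] U (t, y) :=
      funext fun y => iteratedDeriv_slice hU 2 t y
    rw [e1, e2] at h0
    have h2 : HasDerivAt (fun y => pdx^[2] U (t, y)) (pdx^[3] U (t, x)) x := by
      have h := hasDerivAt_slice_x (contDiff_pdx_iter hU 2) t x
      rwa [show pdx (pdx^[2] U) = pdx^[3] U from (Function.iterate_succ_apply' _ _ _).symm] at h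
    have h0' : HasDerivAt (fun y => u t y) (pdx^[1] U (t, x)) x :=
      hasDerivAt_slice_x hU t x
    have e3 : deriv (fun y => (fun y => pdx^[2] U (t, y)) y + u t y ^ 2) x
        = pdx^[3] U (t, x) + ((2 : ℕ) : ℝ) * u t x ^ (2 - 1) * pdx^[1] U (t, x) :=
      (h2.add (h0'.pow 2)).deriv
    rw [e3] at h0
    show pdt U (t, x) = -(pdx^[3] U (t, x) + 2 * (u t x * pdx^[1] U (t, x)))
    linear_combination h0
  -- rewrite the integrand
  have hcong : ∀ t : ℝ, (fun x : ℝ => (iteratedDeriv 2 (u t) x) ^ 2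
      - (10 / 3) * (deriv (u t) x) ^ 2 * u t x + (5 / 9) * (u t x) ^ 4)
      = fun x : ℝ => pdx^[2] U (t, x) ^ 2 - 10 / 3 * (pdx^[1] U (t, x) ^ 2 * U (t, x))
        + 5 / 9 * U (t, x) ^ 4 := by
    intro t
    funext x
    have e2 : iteratedDeriv 2 (u t) x = pdx^[2] U (t, x) := iteratedDeriv_slice hU 2 t x
    have e1 : deriv (u t) x = pdx^[1] U (t, x) :=
      HasDerivAt.deriv (f := fun y => u t y) (hasDerivAt_slice_x hU t x)
    rw [e1, e2]
    ring
  intro t₁ ht₁ t₂ ht₂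
  rcases le_total t₁ t₂ with h | h
  · rw [show (∫ x : ℝ, ((iteratedDeriv 2 (u t₁) x) ^ 2
        - (10 / 3) * (deriv (u t₁) x) ^ 2 * u t₁ x + (5 / 9) * (u t₁ x) ^ 4)) = _ from
          congrArg _ (hcong t₁),
        show (∫ x : ℝ, ((iteratedDeriv 2 (u t₂) x) ^ 2
        - (10 / 3) * (deriv (u t₂) x) ^ 2 * u t₂ x + (5 / 9) * (u t₂ x) ^ 4)) = _ from
          congrArg _ (hcong t₂)]
    exact key_aux J U hU hpde hdecay t₁ ht₁ t₂ ht₂ h (hJ.out ht₁ ht₂)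
  · rw [show (∫ x : ℝ, ((iteratedDeriv 2 (u t₁) x) ^ 2
        - (10 / 3) * (deriv (u t₁) x) ^ 2 * u t₁ x + (5 / 9) * (u t₁ x) ^ 4)) = _ from
          congrArg _ (hcong t₁),
        show (∫ x : ℝ, ((iteratedDeriv 2 (u t₂) x) ^ 2
        - (10 / 3) * (deriv (u t₂) x) ^ 2 * u t₂ x + (5 / 9) * (u t₂ x) ^ 4)) = _ from
          congrArg _ (hcong t₂)]
    exact (key_aux J U hU hpde hdecay t₂ ht₂ t₁ ht₁ h (hJ.out ht₂ ht₁)).symm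

end
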